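/- Let {s_1,...,s_K} be an (M,K,L)-schedule sequence set with respect to a partition of the K nodes into W nonempty groups whose smallest group size is k, and suppose in addition that for every node N_i ∈ G_m the number of time slots t ∈ Z_L with s_i(t) = T_m (the number of transmitting symbols in s_i) is a multiple of W. Then L ≥ ⌈8(k−1)²·W/9⌉. -/

import Mathlib

/-- A schedule symbol for a system with `W` channels: `T m` means "transmit on
channel `m`" and `R r` means "receive on channel `r`". -/
inductive SchedSym (W : ℕ) where
  | T : Fin W → SchedSym W
  | R : Fin W → SchedSym W
deriving DecidableEq

/-- `IsScheduleSet W K L G s` says that `s` is an `(M,K,L)`-schedule sequence set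
(for any number of channels `M ≥ W`) with respect to the partition of the `K` nodes
into the `W` groups given by the group-assignment map `G` (node `i` lies in group
`G i`). Sequences are modeled as `ℕ → SchedSym W`, indexed modulo `L`.

* `own_channel`: a node in group `m` only uses the transmit symbol `T m`;
* `intra`: intra-group requirement (eq. (1) of the paper) for all offsets `τ ∈ Z_L^K`;
* `inter`: inter-group requirement (eq. (2) of the paper) for all offsets `τ ∈ Z_L^K`. -/
structure IsScheduleSet (W K L : ℕ) (G : Fin K → Fin W)
    (s : Fin K → ℕ → SchedSym W) : Prop where
  own_channel : ∀ (i : Fin K) (t : ℕ) (m : Fin W), s i t = SchedSym.T m → m = G i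
  intra : ∀ τ : Fin K → ℕ, (∀ i, τ i < L) → ∀ i j : Fin K, i ≠ j → G i = G j →
    ∃ t < L, s i ((t + τ i) % L) = SchedSym.T (G i) ∧
      s j ((t + τ j) % L) = SchedSym.R (G i) ∧
      ∀ x : Fin K, x ≠ i → x ≠ j → G x = G i → s x ((t + τ x) % L) ≠ SchedSym.T (G i)
  inter : ∀ τ : Fin K → ℕ, (∀ i, τ i < L) → ∀ i j : Fin K, G i ≠ G j →
    ∃ t < L, s i ((t + τ i) % L) = SchedSym.T (G i) ∧
      s j ((t + τ j) % L) = SchedSym.R (G i) ∧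
      ∀ x : Fin K, x ≠ i → G x = G i → s x ((t + τ x) % L) ≠ SchedSym.T (G i)

/-- The size of group `m` under the group-assignment map `G`. -/
def groupSize {W K : ℕ} (G : Fin K → Fin W) (m : Fin W) : ℕ :=
  (Finset.univ.filter (fun i => G i = m)).card

/-!
Fix a node `j` and a channel `n`, and let `D` be the members of group `n` other than `j`. Whatever
the offsets, every `i ∈ D` must reach `j` on channel `n` in a slot where no other member of `D`
transmits. Take `i ∈ D` with the fewest transmit slots, `a` of them, and offset `j` so that only
`u ≤ a |B| / L` of them meet the set `B` of slots in which `j` listens on channel `n`. Then shift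
the other members of `D` one at a time, each (by averaging over its offsets) destroying at least a
fraction `κ = a / L` of the surviving slots. The potential `Φ_κ(r) = ∑_{ρ ≤ r} 1 / ⌈κρ⌉` drops by
at least one per node, so `|D| ≤ Φ_κ(u)`. Comparing `Φ_κ` with harmonic numbers and using
`8 H_m² ≤ 9 m` gives `8 |D|² ≤ 8 Φ_κ(u)² ≤ 9 u / κ ≤ 9 |B|`. Finally `|D| ≥ k - 1`, and the sets
`B` of the `W` channels are disjoint, so `8 (k - 1)² W ≤ 9 L`.
-/

open Finset

/-- Equality holds at `n = 2`; this is where the constant `8 / 9` comes from. -/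
theorem eight_mul_sq_harmonic_le (n : ℕ) : 8 * harmonic n ^ 2 ≤ 9 * n := by
  induction n with
  | zero => simp
  | succ n ih =>
    rcases Nat.lt_or_ge n 2 with hn | hn
    · interval_cases n <;> norm_num [harmonic_succ]
    set w : ℚ := n + 1 with hw_def
    have hw : 3 ≤ w := by rw [hw_def]; exact_mod_cast Nat.succ_le_succ hn
    have ih' : 8 * harmonic n ^ 2 ≤ 9 * (w - 1) := by rw [hw_def]; simpa using ih
    have hH : 0 < harmonic n := harmonic_pos (by omega)
    have key : 16 * harmonic n * w ≤ 9 * w ^ 2 - 8 := by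
      refine le_of_sq_le_sq ?_ (by nlinarith)
      nlinarith [mul_le_mul_of_nonneg_left ih' (sq_nonneg w), sq_nonneg (w - 3),
        sq_nonneg (w ^ 2 - 3 * w)]
    have hwv : w * w⁻¹ = 1 := mul_inv_cancel₀ (by positivity)
    rw [harmonic_succ]
    push_cast
    rw [← hw_def]
    nlinarith [mul_le_mul_of_nonneg_right key (sq_nonneg w⁻¹)]

lemma Nat.ceil_eq_one_of_pos_of_le_one {κ : ℝ} (hκ : 0 < κ) (hκ1 : κ ≤ 1) : ⌈κ⌉₊ = 1 :=
  (Nat.ceil_eq_iff one_ne_zero).mpr ⟨by simpa using hκ, by simpa using hκ1⟩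

/-- `ceilHarmonic κ n = ∑_{ρ = 1}^{n} 1 / ⌈κρ⌉`: a bound on the number of rounds in which a set of
size `n` can lose a `κ`-fraction of its elements and stay nonempty. -/
noncomputable def ceilHarmonic (κ : ℝ) (n : ℕ) : ℝ := ∑ ρ ∈ range n, (⌈κ * (ρ + 1)⌉₊ : ℝ)⁻¹

section ceilHarmonic

variable {κ : ℝ}

lemma ceilHarmonic_succ (κ : ℝ) (n : ℕ) :
    ceilHarmonic κ (n + 1) = ceilHarmonic κ n + (⌈κ * (n + 1)⌉₊ : ℝ)⁻¹ :=
  sum_range_succ ..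

lemma ceilHarmonic_nonneg (κ : ℝ) (n : ℕ) : 0 ≤ ceilHarmonic κ n :=
  sum_nonneg fun _ _ => by positivity

lemma ceilHarmonic_mono (κ : ℝ) : Monotone (ceilHarmonic κ) := fun _ _ h =>
  sum_le_sum_of_subset_of_nonneg (range_subset_range.mpr h) fun _ _ _ => by positivity

lemma ceilHarmonic_one (hκ : 0 < κ) (hκ1 : κ ≤ 1) : ceilHarmonic κ 1 = 1 := by
  simp [ceilHarmonic, Nat.ceil_eq_one_of_pos_of_le_one hκ hκ1]

lemma ceilHarmonic_add_one_le (hκ : 0 < κ) {r r' : ℕ} (hr : 0 < r) (h : r' + κ * r ≤ r) :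
    ceilHarmonic κ r' + 1 ≤ ceilHarmonic κ r := by
  have hr' : r' ≤ r := by exact_mod_cast (by nlinarith : (r' : ℝ) ≤ r)
  have hcard : ⌈κ * r⌉₊ ≤ #(Ico r' r) := by
    rw [Nat.card_Ico, Nat.ceil_le, Nat.cast_sub hr']
    linarith
  have hterm : ∀ ρ ∈ Ico r' r, (⌈κ * r⌉₊ : ℝ)⁻¹ ≤ (⌈κ * (ρ + 1)⌉₊ : ℝ)⁻¹ := by
    intro ρ hρ
    have hρr : (ρ : ℝ) + 1 ≤ r := by exact_mod_cast (mem_Ico.mp hρ).2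
    gcongr
  calc ceilHarmonic κ r' + 1
      ≤ ceilHarmonic κ r' + #(Ico r' r) • (⌈κ * r⌉₊ : ℝ)⁻¹ := by
        gcongr
        rw [nsmul_eq_mul, ← div_eq_mul_inv, le_div_iff₀ (by positivity), one_mul]
        exact_mod_cast hcard
    _ ≤ ceilHarmonic κ r' + ∑ ρ ∈ Ico r' r, (⌈κ * (ρ + 1)⌉₊ : ℝ)⁻¹ := by
        gcongr
        exact card_nsmul_le_sum _ _ _ hterm
    _ = ceilHarmonic κ r := sum_range_add_sum_Ico _ hr'

lemma ceilHarmonic_le (hκ : 0 < κ) (hκ1 : κ ≤ 1) {n : ℕ} (hn : 1 ≤ n) :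
    ceilHarmonic κ n ≤ (harmonic ⌈κ * n⌉₊ - 1) / κ + n / ⌈κ * n⌉₊ := by
  induction n, hn using Nat.le_induction with
  | base => simp [ceilHarmonic_one hκ hκ1, Nat.ceil_eq_one_of_pos_of_le_one hκ hκ1]
  | succ n hn ih =>
    set m := ⌈κ * n⌉₊
    have hκn : κ * n ≤ m := Nat.le_ceil _
    have hm0 : (0 : ℝ) < m := by positivity
    have hmono : m ≤ ⌈κ * (n + 1 : ℕ)⌉₊ := Nat.ceil_mono (by gcongr; simp)
    have hjump : ⌈κ * (n + 1 : ℕ)⌉₊ ≤ m + 1 := by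
      rw [Nat.ceil_le]; push_cast; linarith
    rw [ceilHarmonic_succ]
    push_cast at hmono hjump ⊢
    rcases (show ⌈κ * (n + 1)⌉₊ = m ∨ ⌈κ * (n + 1)⌉₊ = m + 1 by omega) with h | h
    · rw [h]
      calc _ ≤ (harmonic m - 1) / κ + n / m + (m : ℝ)⁻¹ := by gcongr
        _ = _ := by ring
    · rw [h]
      push_cast [harmonic_succ]
      have : (n : ℝ) / m ≤ 1 / (κ * (m + 1)) + n / (m + 1) := by
        rw [div_add_div _ _ (by positivity) (by positivity), le_div_iff₀ (by positivity)]
        field_simp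
        nlinarith
      calc _ ≤ (harmonic m - 1) / κ + n / m + ((m : ℝ) + 1)⁻¹ := by gcongr
        _ ≤ _ := by
          rw [add_sub_right_comm, add_div]
          linarith [show (n : ℝ) / (m + 1) + ((m : ℝ) + 1)⁻¹ = (n + 1) / (m + 1) by ring,
            show ((m : ℝ) + 1)⁻¹ / κ = 1 / (κ * (m + 1)) by field_simp]

lemma eight_mul_sq_ceilHarmonic_le (hκ : 0 < κ) (hκ1 : κ ≤ 1) (n : ℕ) :
    8 * ceilHarmonic κ n ^ 2 ≤ 9 * n / κ := by
  rcases Nat.eq_zero_or_pos n with rfl | hn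
  · simp [ceilHarmonic]
  obtain ⟨p, hp⟩ : ∃ p, ⌈κ * n⌉₊ = p + 1 :=
    Nat.exists_eq_add_one.mpr (Nat.ceil_pos.mpr (by positivity))
  set z := κ * n - p with hz
  have hz1 : z ≤ 1 := by
    have := Nat.le_ceil (κ * n); rw [hp] at this; push_cast at this; linarith
  have hz0 : 0 ≤ z := by
    have := Nat.ceil_lt_add_one (by positivity : 0 ≤ κ * n); rw [hp] at this
    push_cast at this; linarith
  -- the bound of `ceilHarmonic_le` is `1 / κ` times a convex combination of `H_p` and `H_{p+1}`
  have hbound : ceilHarmonic κ n ≤ ((1 - z) * harmonic p + z * harmonic (p + 1)) / κ := by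
    refine (ceilHarmonic_le hκ hκ1 hn).trans_eq ?_
    rw [hp]
    push_cast [harmonic_succ]
    field_simp
    ring
  have hconv : 8 * ((1 - z) * harmonic p + z * harmonic (p + 1) : ℝ) ^ 2 ≤ 9 * (p + z) := by
    have hp₁ : 8 * (harmonic p : ℝ) ^ 2 ≤ 9 * p := by exact_mod_cast eight_mul_sq_harmonic_le p
    have hp₂ : 8 * (harmonic (p + 1) : ℝ) ^ 2 ≤ 9 * (p + 1) := by
      exact_mod_cast eight_mul_sq_harmonic_le (p + 1)
    nlinarith [mul_nonneg (mul_nonneg hz0 (sub_nonneg.mpr hz1))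
      (sq_nonneg ((harmonic p : ℝ) - harmonic (p + 1)))]
  have h0 := ceilHarmonic_nonneg κ n
  calc 8 * ceilHarmonic κ n ^ 2
      ≤ 8 * (((1 - z) * harmonic p + z * harmonic (p + 1)) / κ) ^ 2 := by gcongr
    _ ≤ 9 * (p + z) / κ ^ 2 := by rw [div_pow, ← mul_div_assoc]; gcongr
    _ = 9 * n / κ := by rw [hz]; field_simp; ring

end ceilHarmonic

section Translates

variable {Γ : Type*} [AddCommGroup Γ] [Fintype Γ] [DecidableEq Γ]

lemma sum_card_filter_add_mem (A B : Finset Γ) :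
    ∑ σ, #{t ∈ A | t + σ ∈ B} = #A * #B := by
  simp_rw [card_filter]
  rw [sum_comm]
  have (t : Γ) : ∑ σ, (if t + σ ∈ B then 1 else 0) = #B := by
    calc _ = ∑ σ, if σ ∈ B then 1 else 0 := Equiv.sum_comp (Equiv.addLeft t) _
      _ = #B := by simp
  simp [this]

lemma exists_card_filter_add_mem_mul_le (A B : Finset Γ) :
    ∃ σ, #{t ∈ A | t + σ ∈ B} * Fintype.card Γ ≤ #A * #B := by
  obtain ⟨σ, -, hσ⟩ := exists_le_of_sum_le (s := univ) univ_nonempty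
    (f := fun σ => #{t ∈ A | t + σ ∈ B} * Fintype.card Γ) (g := fun _ => #A * #B)
    (by rw [← sum_mul, sum_card_filter_add_mem, sum_const, card_univ, smul_eq_mul, mul_comm])
  exact ⟨σ, hσ⟩

lemma exists_mul_le_card_filter_add_mem (A B : Finset Γ) :
    ∃ σ, #A * #B ≤ #{t ∈ A | t + σ ∈ B} * Fintype.card Γ := by
  obtain ⟨σ, -, hσ⟩ := exists_le_of_sum_le (s := univ) univ_nonempty
    (g := fun σ => #{t ∈ A | t + σ ∈ B} * Fintype.card Γ) (f := fun _ => #A * #B)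
    (by rw [← sum_mul (s := univ) (f := fun σ => #{t ∈ A | t + σ ∈ B}), sum_card_filter_add_mem,
      sum_const, card_univ, smul_eq_mul, mul_comm])
  exact ⟨σ, hσ⟩

variable {ι : Type*} [DecidableEq ι]

/-- The translates are chosen greedily: each new `A x` covers at least a `κ`-fraction of the
current survivors. -/
lemma exists_shifts_ceilHarmonic_add_card_le {κ : ℝ} (hκ : 0 < κ) (A : ι → Finset Γ)
    (U : Finset Γ) (X : Finset ι) (hA : ∀ x ∈ X, κ * Fintype.card Γ ≤ #(A x))
    (hsurv : ∀ τ : ι → Γ, ∃ t ∈ U, ∀ x ∈ X, t + τ x ∉ A x) :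
    ∃ τ : ι → Γ, ceilHarmonic κ #{t ∈ U | ∀ x ∈ X, t + τ x ∉ A x} + #X ≤ ceilHarmonic κ #U := by
  induction X using Finset.induction_on with
  | empty => exact ⟨0, by simp⟩
  | insert x X hxX ih =>
    obtain ⟨τ, hτ⟩ := ih (fun y hy => hA y (mem_insert_of_mem hy)) fun τ => by
      obtain ⟨t, htU, ht⟩ := hsurv τ
      exact ⟨t, htU, fun y hy => ht y (mem_insert_of_mem hy)⟩
    set R := {t ∈ U | ∀ y ∈ X, t + τ y ∉ A y}
    obtain ⟨σ, hσ⟩ := exists_mul_le_card_filter_add_mem R (A x)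
    set τ' := Function.update τ x σ
    have hτ' : ∀ y ∈ X, τ' y = τ y := fun y hy =>
      Function.update_of_ne (by rintro rfl; exact hxX hy) _ _
    have hτ'x : τ' x = σ := Function.update_self ..
    have hsurvivors : {t ∈ U | ∀ y ∈ insert x X, t + τ' y ∉ A y} = {t ∈ R | t + σ ∉ A x} := by
      rw [filter_filter]
      refine filter_congr fun t _ => ?_
      rw [forall_mem_insert, hτ'x, and_comm]
      exact and_congr_left' (forall₂_congr fun y hy => by rw [hτ' y hy])
    have hR : 0 < #R := by
      obtain ⟨t, htU, ht⟩ := hsurv τ'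
      refine card_pos.mpr ⟨t, mem_filter.mpr ⟨htU, fun y hy => ?_⟩⟩
      simpa [hτ' y hy] using ht y (mem_insert_of_mem hy)
    have hsplit := card_filter_add_card_filter_not (s := R) (fun t => t + σ ∈ A x)
    have hkill : κ * #R ≤ #{t ∈ R | t + σ ∈ A x} := by
      have hΓ : (0 : ℝ) < Fintype.card Γ := by exact_mod_cast Fintype.card_pos
      have : (#R : ℝ) * #(A x) ≤ #{t ∈ R | t + σ ∈ A x} * Fintype.card Γ := by exact_mod_cast hσ
      nlinarith [hA x (mem_insert_self x X)]
    have hstep := ceilHarmonic_add_one_le hκ hR (r' := #{t ∈ R | t + σ ∉ A x}) (by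
      have : (#{t ∈ R | t + σ ∈ A x} : ℝ) + #{t ∈ R | t + σ ∉ A x} = #R := by
        exact_mod_cast hsplit
      linarith)
    refine ⟨τ', ?_⟩
    rw [hsurvivors, card_insert_of_notMem hxX]
    push_cast
    linarith

theorem eight_mul_sq_card_le_nine_mul_card (D : Finset ι) (A : ι → Finset Γ) (B : Finset Γ)
    (hreach : ∀ i ∈ D, ∀ σ : Γ, ∀ τ : ι → Γ,
      ∃ t ∈ A i, t + σ ∈ B ∧ ∀ x ∈ D.erase i, t + τ x ∉ A x) :
    8 * (#D : ℝ) ^ 2 ≤ 9 * #B := by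
  rcases D.eq_empty_or_nonempty with rfl | hD
  · simp
  obtain ⟨i, hi, hmin⟩ := exists_min_image D (fun x => #(A x)) hD
  have hΓ : (0 : ℝ) < Fintype.card Γ := by exact_mod_cast Fintype.card_pos
  have hAi : (0 : ℝ) < #(A i) := by
    obtain ⟨t, ht, -⟩ := hreach i hi 0 0
    exact_mod_cast card_pos.mpr ⟨t, ht⟩
  set κ : ℝ := #(A i) / Fintype.card Γ with hκ
  have hκ0 : 0 < κ := by positivity
  have hκ1 : κ ≤ 1 := div_le_one_of_le₀ (by exact_mod_cast card_le_univ _) hΓ.le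
  obtain ⟨σ, hσ⟩ := exists_card_filter_add_mem_mul_le (A i) B
  set U := {t ∈ A i | t + σ ∈ B}
  have hreachU (τ : ι → Γ) : ∃ t ∈ U, ∀ x ∈ D.erase i, t + τ x ∉ A x := by
    obtain ⟨t, htA, htB, ht⟩ := hreach i hi σ τ
    exact ⟨t, mem_filter.mpr ⟨htA, htB⟩, ht⟩
  obtain ⟨τ, hτ⟩ := exists_shifts_ceilHarmonic_add_card_le hκ0 A U (D.erase i)
    (fun x hx => by
      rw [hκ, div_mul_cancel₀ _ hΓ.ne']
      exact_mod_cast hmin x (mem_of_mem_erase hx)) hreachU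
  have hsurvivor : 1 ≤ ceilHarmonic κ #{t ∈ U | ∀ x ∈ D.erase i, t + τ x ∉ A x} := by
    obtain ⟨t, htU, ht⟩ := hreachU τ
    rw [← ceilHarmonic_one hκ0 hκ1]
    exact ceilHarmonic_mono κ (card_pos.mpr ⟨t, mem_filter.mpr ⟨htU, ht⟩⟩)
  have hD : (#D : ℝ) ≤ ceilHarmonic κ #U := by
    have : ((#(D.erase i) : ℕ) : ℝ) + 1 = #D := by exact_mod_cast card_erase_add_one hi
    linarith
  have hU : (#U : ℝ) / κ ≤ #B := by
    rw [hκ, div_div_eq_mul_div, div_le_iff₀ hAi, mul_comm (#B : ℝ)]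
    exact_mod_cast hσ
  calc 8 * (#D : ℝ) ^ 2 ≤ 8 * ceilHarmonic κ #U ^ 2 := by gcongr
    _ ≤ 9 * #U / κ := eight_mul_sq_ceilHarmonic_le hκ0 hκ1 _
    _ ≤ 9 * #B := by rw [mul_div_assoc]; gcongr

end Translates

section Schedules

variable {W K L : ℕ} {G : Fin K → Fin W} {s : Fin K → ℕ → SchedSym W}

/-- Slots of one period, indexed by the cyclic group `Fin L` so that offsets act by translation. -/
def slots (L : ℕ) (u : ℕ → SchedSym W) (a : SchedSym W) : Finset (Fin L) := {t | u t = a}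

lemma IsScheduleSet.exists_slot [NeZero L] (hs : IsScheduleSet W K L G s) (τ : Fin K → Fin L)
    {i j : Fin K} (hij : i ≠ j) :
    ∃ t : Fin L, s i ↑(t + τ i) = .T (G i) ∧ s j ↑(t + τ j) = .R (G i) ∧
      ∀ x, x ≠ i → x ≠ j → G x = G i → s x ↑(t + τ x) ≠ .T (G i) := by
  by_cases hG : G i = G j
  · obtain ⟨t, ht, h₁, h₂, h₃⟩ := hs.intra (fun x => τ x) (fun x => (τ x).isLt) i j hij hG
    exact ⟨⟨t, ht⟩, by simpa [Fin.val_add] using h₁, by simpa [Fin.val_add] using h₂,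
      fun x hxi hxj hx => by simpa [Fin.val_add] using h₃ x hxi hxj hx⟩
  · obtain ⟨t, ht, h₁, h₂, h₃⟩ := hs.inter (fun x => τ x) (fun x => (τ x).isLt) i j hG
    exact ⟨⟨t, ht⟩, by simpa [Fin.val_add] using h₁, by simpa [Fin.val_add] using h₂,
      fun x hxi _ hx => by simpa [Fin.val_add] using h₃ x hxi hx⟩

lemma IsScheduleSet.reaches [NeZero L] (hs : IsScheduleSet W K L G s) (n : Fin W) (j : Fin K) :
    ∀ i ∈ ({x | G x = n} : Finset (Fin K)).erase j, ∀ σ : Fin L, ∀ τ : Fin K → Fin L,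
      ∃ t ∈ slots L (s i) (.T n), t + σ ∈ slots L (s j) (.R n) ∧
        ∀ x ∈ (({x | G x = n} : Finset (Fin K)).erase j).erase i,
          t + τ x ∉ slots L (s x) (.T n) := by
  intro i hi σ τ
  obtain ⟨hij, hi⟩ : i ≠ j ∧ G i = n := by simpa using hi
  obtain ⟨t, h₁, h₂, h₃⟩ := hs.exists_slot (Function.update (Function.update τ i 0) j σ) hij
  subst hi
  refine ⟨t, by simpa [slots, hij] using h₁, by simpa [slots] using h₂, fun x hx => ?_⟩
  obtain ⟨hxi, hxj, hx⟩ : x ≠ i ∧ x ≠ j ∧ G x = G i := by simpa using hx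
  simpa [slots, hxi, hxj] using h₃ x hxi hxj hx

lemma sum_card_slots_R_le (u : ℕ → SchedSym W) : ∑ n, #(slots L u (.R n)) ≤ L := by
  have hdisj : ((univ : Finset (Fin W)) : Set (Fin W)).PairwiseDisjoint
      fun n => slots L u (.R n) :=
    fun n _ n' _ hne => disjoint_filter.mpr fun _ _ h h' => hne (SchedSym.R.inj (h.symm.trans h'))
  rw [← card_biUnion hdisj]
  simpa using card_le_univ (univ.biUnion fun n => slots L u (.R n))

end Schedules

theorem schedule_set_period_lower_bound_of_dvd_general
    (K L W k : ℕ) (hL : 0 < L)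
    (G : Fin K → Fin W) (hG : Function.Surjective G)
    (hkmin : ∀ m : Fin W, k ≤ groupSize G m)
    (hkex : ∃ m : Fin W, groupSize G m = k)
    (s : Fin K → ℕ → SchedSym W) (hs : IsScheduleSet W K L G s) :
    ⌈(8 * ((k : ℝ) - 1) ^ 2 * (W : ℝ)) / 9⌉ ≤ (L : ℤ) := by
  have : NeZero L := ⟨hL.ne'⟩
  obtain ⟨m₀, hm₀⟩ := hkex
  obtain ⟨j, hj⟩ := hG m₀
  have hk : 1 ≤ k := hm₀ ▸ card_pos.mpr ⟨j, by simp [hj]⟩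
  have hchannel (n : Fin W) : 8 * ((k : ℝ) - 1) ^ 2 ≤ 9 * #(slots L (s j) (.R n)) := by
    set D := ({x | G x = n} : Finset (Fin K)).erase j
    have hD : k - 1 ≤ #D := (Nat.sub_le_sub_right (hkmin n) 1).trans pred_card_le_card_erase
    have hD' : (k : ℝ) - 1 ≤ #D := by rw [← Nat.cast_one, ← Nat.cast_sub hk]; exact_mod_cast hD
    calc 8 * ((k : ℝ) - 1) ^ 2 ≤ 8 * (#D : ℝ) ^ 2 := by
          gcongr; exact sub_nonneg.mpr (by exact_mod_cast hk)
      _ ≤ _ := eight_mul_sq_card_le_nine_mul_card _ _ _ (hs.reaches n j)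
  rw [Int.ceil_le, Int.cast_natCast, div_le_iff₀ (by norm_num)]
  calc 8 * ((k : ℝ) - 1) ^ 2 * W = ∑ _n : Fin W, 8 * ((k : ℝ) - 1) ^ 2 := by simp; ring
    _ ≤ ∑ n, 9 * (#(slots L (s j) (.R n)) : ℝ) := sum_le_sum fun n _ => hchannel n
    _ = 9 * ∑ n, (#(slots L (s j) (.R n)) : ℝ) := (mul_sum ..).symm
    _ ≤ 9 * L := by gcongr; exact_mod_cast sum_card_slots_R_le (s j)
    _ = L * 9 := mul_comm ..

/-- if `{s_1,...,s_K}` is an `(M,K,L)`-schedule sequence set with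
respect to a partition into `W` nonempty groups with smallest group size `k`, and for
every node the number of transmitting symbols in its sequence (over one period) is a
multiple of `W`, then `L ≥ ⌈8(k−1)²·W/9⌉`. -/
theorem schedule_set_period_lower_bound_of_dvd
    (M K L W k : ℕ) (hL : 0 < L) (hW : 1 ≤ W) (hWM : W ≤ M) (hMK : M ≤ K)
    (G : Fin K → Fin W) (hG : Function.Surjective G)
    (hkmin : ∀ m : Fin W, k ≤ groupSize G m)
    (hkex : ∃ m : Fin W, groupSize G m = k)
    (s : Fin K → ℕ → SchedSym W) (hs : IsScheduleSet W K L G s)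
    (hdvd : ∀ i : Fin K,
      W ∣ ((Finset.range L).filter (fun t => s i t = SchedSym.T (G i))).card) :
    ⌈(8 * ((k : ℝ) - 1) ^ 2 * (W : ℝ)) / 9⌉ ≤ (L : ℤ) :=
  schedule_set_period_lower_bound_of_dvd_general K L W k hL G hG hkmin hkex s hs
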